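/- Let p = (p0,p1,p2) ∈ [0,1)³ satisfy κ_△(p) = 0. Consider the triangle graph G on vertex set {A,B,C} with edges BC, CA, AB, where independently BC is open with probability p0, CA with probability p1, and AB with probability p2; and the star graph G' on vertex set {A,B,C,O} with edges OA, OB, OC, where independently OA is open with probability 1−p0, OB with probability 1−p1, and OC with probability 1−p2. Then the two random vectors of connectivity indicators (1[x ↔ y in G] : x,y ∈ {A,B,C}) and (1[x ↔ y in G'] : x,y ∈ {A,B,C}) have the same joint law. -/

import Mathlib

open MeasureTheory Set

set_option linter.unusedVariables false

namespace Perc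

/-- Points of the plane. -/
abbrev Pt := ℝ × ℝ

/-- A lattice embedded in the plane, with edges indexed by `E`;
each edge is embedded as the segment between the two endpoints given by `ends`. -/
structure LatticeOn (E : Type) where
  ends : E → Pt × Pt

/-- Bond configurations. -/
abbrev Config (E : Type) := E → Bool

/-- `P` is the Bernoulli bond-percolation product measure in which edge `e`
is open with probability `p e`, independently over edges. -/
def IsBernoulliProduct {E : Type} (p : E → ℝ) (P : Measure (Config E)) : Prop :=
  IsProbabilityMeasure P ∧
    ∀ (s : Finset E) (f : E → Bool),
      P {ω | ∀ e ∈ s, ω e = f e} =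
        ∏ e ∈ s, ENNReal.ofReal (if f e then p e else 1 - p e)

/-- The union of the closed segments of the open edges. -/
def openEdgeSet {E : Type} (L : LatticeOn E) (ω : Config E) : Set Pt :=
  ⋃ e ∈ {e : E | ω e = true}, segment ℝ (L.ends e).1 (L.ends e).2

/-- There is an arc, contained in `S` and in the union of the open edges,
with one endpoint in `A` and the other in `B`. -/
def CrossingIn {E : Type} (L : LatticeOn E) (ω : Config E) (S A B : Set Pt) : Prop :=
  ∃ γ : ℝ → Pt, ContinuousOn γ (Icc 0 1) ∧ γ 0 ∈ A ∧ γ 1 ∈ B ∧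
    ∀ t ∈ Icc (0:ℝ) 1, γ t ∈ S ∩ openEdgeSet L ω

/-- Rotation of the plane by angle `θ`. -/
noncomputable def rot (θ : ℝ) (z : Pt) : Pt :=
  (Real.cos θ * z.1 - Real.sin θ * z.2, Real.sin θ * z.1 + Real.cos θ * z.2)

/-- `f` comprises a rotation and a translation. -/
def IsRotTrans (f : Pt → Pt) : Prop := ∃ θ : ℝ, ∃ t : Pt, f = fun z => rot θ z + t

def stdRect (h l : ℝ) : Set Pt := {z | 0 ≤ z.1 ∧ z.1 ≤ h ∧ 0 ≤ z.2 ∧ z.2 ≤ l}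
def leftSide (h l : ℝ) : Set Pt := {z | z.1 = 0 ∧ 0 ≤ z.2 ∧ z.2 ≤ l}
def rightSide (h l : ℝ) : Set Pt := {z | z.1 = h ∧ 0 ≤ z.2 ∧ z.2 ≤ l}
def bottomSide (h l : ℝ) : Set Pt := {z | z.2 = 0 ∧ 0 ≤ z.1 ∧ z.1 ≤ h}
def topSide (h l : ℝ) : Set Pt := {z | z.2 = l ∧ 0 ≤ z.1 ∧ z.1 ≤ h}

/-- The box `f(stdRect h l)` (where `f` is a rotation plus translation) possesses
open crossings in both directions. -/
def HasBoxCrossings {E : Type} (L : LatticeOn E) (ω : Config E) (h l : ℝ) (f : Pt → Pt) : Prop :=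
  CrossingIn L ω (f '' stdRect h l) (f '' leftSide h l) (f '' rightSide h l) ∧
  CrossingIn L ω (f '' stdRect h l) (f '' bottomSide h l) (f '' topSide h l)

/-- The box-crossing property: for every `α > 0` there is `δ > 0` such that every box
of size `αN × N` (any position and orientation) possesses open crossings with
probability at least `δ`, for all large `N`. -/
def BoxCrossingProperty {E : Type} (L : LatticeOn E) (P : Measure (Config E)) : Prop :=
  ∀ α : ℝ, 0 < α → ∃ δ : ℝ, 0 < δ ∧ ∃ N₀ : ℕ, ∀ N : ℕ, N₀ ≤ N →
    ∀ f : Pt → Pt, IsRotTrans f →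
      ENNReal.ofReal δ ≤ P {ω | HasBoxCrossings L ω (α * N) N f}

/-- Horizontal-crossing event of the box `[-m,m] × [0,n]`. -/
def Ch {E : Type} (L : LatticeOn E) (m n : ℝ) (ω : Config E) : Prop :=
  CrossingIn L ω {z | -m ≤ z.1 ∧ z.1 ≤ m ∧ 0 ≤ z.2 ∧ z.2 ≤ n}
    {z | z.1 = -m ∧ 0 ≤ z.2 ∧ z.2 ≤ n} {z | z.1 = m ∧ 0 ≤ z.2 ∧ z.2 ≤ n}

/-- Vertical-crossing event of the box `[-m,m] × [0,n]`. -/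
def Cv {E : Type} (L : LatticeOn E) (m n : ℝ) (ω : Config E) : Prop :=
  CrossingIn L ω {z | -m ≤ z.1 ∧ z.1 ≤ m ∧ 0 ≤ z.2 ∧ z.2 ≤ n}
    {z | z.2 = 0 ∧ -m ≤ z.1 ∧ z.1 ≤ m} {z | z.2 = n ∧ -m ≤ z.1 ∧ z.1 ≤ m}

/-- `u` and `v` are the endpoints of some open edge. -/
def openAdj {E : Type} (L : LatticeOn E) (ω : Config E) (u v : Pt) : Prop :=
  ∃ e, ω e = true ∧ (L.ends e = (u, v) ∨ L.ends e = (v, u))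

/-- `u` and `v` are joined by a path of open edges. -/
def openConn {E : Type} (L : LatticeOn E) (ω : Config E) : Pt → Pt → Prop :=
  Relation.ReflTransGen (openAdj L ω)

/-- The open cluster at `v`. -/
def cluster {E : Type} (L : LatticeOn E) (ω : Config E) (v : Pt) : Set Pt :=
  {u | openConn L ω v u}

/-- The vertex set of the lattice. -/
def vertexSet {E : Type} (L : LatticeOn E) : Set Pt :=
  ⋃ e : E, {(L.ends e).1, (L.ends e).2}

/-- `v` is the endpoint of an infinite open self-avoiding path. -/
def ConnToInfinity {E : Type} (L : LatticeOn E) (ω : Config E) (v : Pt) : Prop :=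
  ∃ γ : ℕ → Pt, γ 0 = v ∧ Function.Injective γ ∧ ∀ n, openAdj L ω (γ n) (γ (n + 1))

/-- Euclidean distance on the plane. -/
noncomputable def edist2 (u v : Pt) : ℝ := Real.sqrt ((u.1 - v.1) ^ 2 + (u.2 - v.2) ^ 2)

/-- `rad (C_v) ≥ r`, where `rad (C_v)` is the supremum of all `x` such that `C_v`
meets the complement of the open Euclidean ball `v + S_x`. -/
def RadiusGE {E : Type} (L : LatticeOn E) (ω : Config E) (v : Pt) (r : ℝ) : Prop :=
  ∀ x : ℝ, x < r → ∃ u ∈ cluster L ω v, x ≤ edist2 v u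

/-- `κ_□`. -/
def kappaS (a b : ℝ) : ℝ := a + b - 1
/-- `κ_△`. -/
def kappaT (a b c : ℝ) : ℝ := a + b + c - a * b * c - 1
/-- `κ_⬡`. -/
def kappaH (a b c : ℝ) : ℝ := -kappaT (1 - a) (1 - b) (1 - c)

/-- Edges of a square-type lattice: `(a, b, true)` is the `horizontal`-class edge
at `(a,b)` and `(a, b, false)` the `vertical`-class edge at `(a,b)`. -/
abbrev SqE := ℤ × ℤ × Bool
/-- Edges of the triangular lattice (also indexing the dual hexagonal edges):
`(a, b, i)` with `i = 0` horizontal, `i = 1` the right edge of an upwards pointing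
triangle, `i = 2` the left edge of an upwards pointing triangle, in row `b`. -/
abbrev TriE := ℤ × ℤ × Fin 3

/-- The unit square lattice, with vertex set `ℤ²`. -/
noncomputable def sqLattice : LatticeOn SqE :=
  ⟨fun e =>
    if e.2.2 then (((e.1 : ℝ), (e.2.1 : ℝ)), ((e.1 : ℝ) + 1, (e.2.1 : ℝ)))
    else (((e.1 : ℝ), (e.2.1 : ℝ)), ((e.1 : ℝ), (e.2.1 : ℝ) + 1))⟩

/-- The dual of the unit square lattice (shifted by `(1/2, 1/2)`), with each dual edge
indexed by the primal edge it crosses. -/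
noncomputable def sqDualLattice : LatticeOn SqE :=
  ⟨fun e =>
    if e.2.2 then
      (((e.1 : ℝ) + 1 / 2, (e.2.1 : ℝ) - 1 / 2), ((e.1 : ℝ) + 1 / 2, (e.2.1 : ℝ) + 1 / 2))
    else
      (((e.1 : ℝ) - 1 / 2, (e.2.1 : ℝ) + 1 / 2), ((e.1 : ℝ) + 1 / 2, (e.2.1 : ℝ) + 1 / 2))⟩

/-- Vertices of the triangular lattice (equilateral triangles of side `√3`,
one family of edges horizontal). -/
noncomputable def tv (a b : ℤ) : Pt :=
  (Real.sqrt 3 * ((a : ℝ) + (b : ℝ) / 2), 3 / 2 * (b : ℝ))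

/-- The triangular lattice. -/
noncomputable def triLattice : LatticeOn TriE :=
  ⟨fun e =>
    if e.2.2 = 0 then (tv e.1 e.2.1, tv (e.1 + 1) e.2.1)
    else if e.2.2 = 1 then (tv (e.1 + 1) e.2.1, tv e.1 (e.2.1 + 1))
    else (tv e.1 e.2.1, tv e.1 (e.2.1 + 1))⟩

/-- Circumcentre of the upwards pointing triangle with base vertex `tv a b`. -/
noncomputable def hup (a b : ℤ) : Pt :=
  (Real.sqrt 3 * ((a : ℝ) + ((b : ℝ) + 1) / 2), 3 / 2 * (b : ℝ) + 1 / 2)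

/-- Circumcentre of the downwards pointing triangle below the edge `tv a b – tv (a+1) b`. -/
noncomputable def hdown (a b : ℤ) : Pt :=
  (Real.sqrt 3 * ((a : ℝ) + ((b : ℝ) + 1) / 2), 3 / 2 * (b : ℝ) - 1 / 2)

/-- The hexagonal lattice, the planar dual of `triLattice`, with vertices at the
circumcentres of the triangles; each hexagonal edge is indexed by the triangular
edge it crosses. -/
noncomputable def hexLattice : LatticeOn TriE :=
  ⟨fun e =>
    if e.2.2 = 0 then (hdown e.1 e.2.1, hup e.1 e.2.1)
    else if e.2.2 = 1 then (hup e.1 e.2.1, hdown e.1 (e.2.1 + 1))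
    else (hup e.1 e.2.1, hdown (e.1 - 1) (e.2.1 + 1))⟩

/-- The square lattice with horizontal edges of length `√3` and vertical edges of
length `1` (as in the mixed lattices). -/
noncomputable def sqStretch : LatticeOn SqE :=
  ⟨fun e =>
    if e.2.2 then
      ((Real.sqrt 3 * (e.1 : ℝ), (e.2.1 : ℝ)), (Real.sqrt 3 * ((e.1 : ℝ) + 1), (e.2.1 : ℝ)))
    else ((Real.sqrt 3 * (e.1 : ℝ), (e.2.1 : ℝ)), (Real.sqrt 3 * (e.1 : ℝ), (e.2.1 : ℝ) + 1))⟩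

/-- Vertices of the square lattice rotated by `π/4`. -/
noncomputable def rv (a b : ℤ) : Pt :=
  (((a : ℝ) - (b : ℝ)) / Real.sqrt 2, ((a : ℝ) + (b : ℝ)) / Real.sqrt 2)

/-- The square lattice rotated by `π/4`: edges `(a,b,true)` are inclined at angle `π/4`
and edges `(a,b,false)` at angle `3π/4`; the row (height) of such an edge is `a + b`. -/
noncomputable def rsqLattice : LatticeOn SqE :=
  ⟨fun e =>
    if e.2.2 then (rv e.1 e.2.1, rv (e.1 + 1) e.2.1)
    else (rv e.1 e.2.1, rv e.1 (e.2.1 + 1))⟩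

/-- Inhomogeneous intensities on the square lattice: `ph` on horizontal edges,
`pv` on vertical ones. -/
def sqInt (ph pv : ℝ) : SqE → ℝ := fun e => if e.2.2 then ph else pv

/-- Inhomogeneous intensities on the triangular (or hexagonal) lattice:
`p0` on class-0 edges, `p1` on class-1, `p2` on class-2. -/
def triInt (p0 p1 p2 : ℝ) : TriE → ℝ := fun e => ![p0, p1, p2] e.2.2

/-- Highly inhomogeneous intensities on the triangular (or hexagonal) lattice:
`p` on horizontal-class edges, `q n` on right edges of upwards pointing triangles at
height `n`, `q' n` on left edges of upwards pointing triangles at height `n`. -/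
def triHI (p : ℝ) (q q' : ℤ → ℝ) : TriE → ℝ := fun e =>
  if e.2.2 = 0 then p else if e.2.2 = 1 then q e.2.1 else q' e.2.1

/-- Highly inhomogeneous intensities on the rotated square lattice: `q n` on edges
inclined at `π/4` at height `n`, `q' n` on edges inclined at `3π/4` at height `n`. -/
def rsqHI (q q' : ℤ → ℝ) : SqE → ℝ := fun e =>
  if e.2.2 then q (e.1 + e.2.1) else q' (e.1 + e.2.1)


/-! Star–triangle transformation: the triangle graph `G` on `{A,B,C}` (vertices
`0,1,2 : Fin 3`) has edges indexed by `Fin 3`: edge `0 = BC`, `1 = CA`, `2 = AB`;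
edge `i` joins the two vertices distinct from `i`, i.e. vertices `u ≠ v` are joined
by edge `-(u+v)`.  The star graph `G'` on `{A,B,C,O}` (vertices `0,1,2,3 : Fin 4`,
with `O = 3`) has edges indexed by `Fin 3`: edge `i` is `O–i`. -/

/-- Connectivity in the triangle graph with configuration `ω`. -/
def triangleConn (ω : Fin 3 → Bool) : Fin 3 → Fin 3 → Prop :=
  Relation.ReflTransGen (fun u v => u ≠ v ∧ ω (-(u + v)) = true)

/-- Adjacency in the star graph with configuration `ω`: vertex `i < 3` is adjacent
to the centre `O = 3` when the spoke `O–i` is open. -/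
def starAdj (ω : Fin 3 → Bool) (u v : Fin 4) : Prop :=
  ∃ i : Fin 3, ω i = true ∧
    ((u = Fin.castSucc i ∧ v = 3) ∨ (u = 3 ∧ v = Fin.castSucc i))

/-- Connectivity in the star graph with configuration `ω`. -/
def starConn (ω : Fin 3 → Bool) : Fin 4 → Fin 4 → Prop :=
  Relation.ReflTransGen (starAdj ω)

/-- Probability of the configuration `ω` under independent edges with
intensities `p`. -/
def configWeight (p : Fin 3 → ℝ) (ω : Fin 3 → Bool) : ℝ :=
  ∏ i : Fin 3, if ω i then p i else 1 - p i

/-! Both connectivity vectors are functions of the partition of `{A, B, C}` into clusters: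
all separate, exactly one pair joined, or all joined. The pair avoiding vertex `i` is the only
joined pair with probability `pᵢ (1 - pⱼ) (1 - pₖ)` in both graphs (only the edge `i` of the
triangle is open, resp. only the spoke `i` of the star is closed). On the two remaining atoms
the laws differ by `± κ_△(p)`, so they agree exactly when `κ_△(p) = 0`. -/

section TupleSums

variable {β M : Type*} [Fintype β] [AddCommMonoid M]

theorem sum_fin_zero_pi (f : (Fin 0 → β) → M) : ∑ x, f x = f ![] := by
  rw [Fintype.sum_unique]
  exact congrArg f (Subsingleton.elim _ _)

theorem sum_fin_succ_pi {n : ℕ} (f : (Fin (n + 1) → β) → M) :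
    ∑ x, f x = ∑ a, ∑ x, f (Matrix.vecCons a x) := by
  rw [← Fintype.sum_prod_type']
  exact (Fintype.sum_equiv (Fin.consEquiv fun _ => β) _ _ fun _ => rfl).symm

end TupleSums

theorem forall_iff_eq_true_iff_eq {α γ : Type*} (m c : α → γ → Bool) :
    (∀ x y, m x y = true ↔ c x y = true) ↔ m = c :=
  ⟨fun h => funext₂ fun x y => Bool.eq_iff_iff.mpr (h x y), fun h _ _ => h ▸ Iff.rfl⟩

/-- The connectivity matrix of the triangle: `x` and `y` are joined directly by the edge
`-(x + y)`, or through the third vertex by the edges `x` and `y`. -/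
def triangleMat (ω : Fin 3 → Bool) (x y : Fin 3) : Bool :=
  x == y || ω (-(x + y)) || (ω x && ω y)

def starMat (ω : Fin 3 → Bool) (x y : Fin 3) : Bool :=
  x == y || (ω x && ω y)

theorem triangleMat_step : ∀ (ω : Fin 3 → Bool) (x y z : Fin 3), triangleMat ω x y = true →
    y ≠ z → ω (-(y + z)) = true → triangleMat ω x z = true := by
  decide

theorem triangleConn_iff (ω : Fin 3 → Bool) (x y : Fin 3) :
    triangleConn ω x y ↔ triangleMat ω x y = true := by
  constructor
  · intro h
    induction h with
    | refl => simp [triangleMat]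
    | tail _ hyz ih => exact triangleMat_step ω _ _ _ ih hyz.1 hyz.2
  · intro h
    by_cases hxy : x = y
    · exact hxy ▸ .refl
    simp only [triangleMat, Bool.or_eq_true, beq_iff_eq, hxy, false_or,
      Bool.and_eq_true] at h
    rcases h with hedge | ⟨hx, hy⟩
    · exact .single ⟨hxy, hedge⟩
    · have third_ne : ∀ x y : Fin 3, x ≠ y → -(x + y) ≠ x ∧ -(x + y) ≠ y := by decide
      obtain ⟨hzx, hzy⟩ := third_ne x y hxy
      refine .head ⟨hzx.symm, ?_⟩ (.single ⟨hzy, ?_⟩)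
      · rwa [show -(x + -(x + y)) = y by abel]
      · rwa [show -(-(x + y) + y) = x by abel]

theorem starAdj_castSucc_left {ω : Fin 3 → Bool} {x : Fin 3} {v : Fin 4}
    (h : starAdj ω x.castSucc v) : ω x = true := by
  obtain ⟨i, hi, ⟨hxi, -⟩ | ⟨hx, -⟩⟩ := h
  · rwa [Fin.castSucc_inj.mp hxi]
  · exact absurd hx (Fin.castSucc_ne_last x)

theorem starAdj_castSucc_right {ω : Fin 3 → Bool} {u : Fin 4} {y : Fin 3}
    (h : starAdj ω u y.castSucc) : ω y = true := by
  obtain ⟨i, hi, ⟨-, hy⟩ | ⟨-, hyi⟩⟩ := h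
  · exact absurd hy (Fin.castSucc_ne_last y)
  · rwa [Fin.castSucc_inj.mp hyi]

/-- Two distinct outer vertices of the star are joined only through the centre, so exactly
when both of their spokes are open. -/
theorem starConn_castSucc_iff (ω : Fin 3 → Bool) (x y : Fin 3) :
    starConn ω x.castSucc y.castSucc ↔ starMat ω x y = true := by
  simp only [starMat, Bool.or_eq_true, beq_iff_eq, Bool.and_eq_true]
  constructor
  · intro h
    by_cases hxy : x = y
    · exact .inl hxy
    have hne : x.castSucc ≠ y.castSucc := Fin.castSucc_injective 3 |>.ne hxy
    obtain h' | ⟨_, hx, -⟩ := h.cases_head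
    · exact absurd h' hne
    obtain h' | ⟨_, -, hy⟩ := h.cases_tail
    · exact absurd h' hne.symm
    exact .inr ⟨starAdj_castSucc_left hx, starAdj_castSucc_right hy⟩
  · rintro (rfl | ⟨hx, hy⟩)
    · exact .refl
    · exact .head ⟨x, hx, .inl ⟨rfl, rfl⟩⟩ (.single ⟨y, hy, .inr ⟨rfl, rfl⟩⟩)

def separatedMat : Fin 3 → Fin 3 → Bool := fun x y => x == y

/-- Only the two vertices other than `i` are joined. -/
def pairedMat (i : Fin 3) : Fin 3 → Fin 3 → Bool := fun x y => x == y || (x != i && y != i)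

def joinedMat : Fin 3 → Fin 3 → Bool := fun _ _ => true

theorem triangleMat_eval :
    triangleMat ![false, false, false] = separatedMat ∧
    triangleMat ![true, false, false] = pairedMat 0 ∧
    triangleMat ![false, true, false] = pairedMat 1 ∧
    triangleMat ![false, false, true] = pairedMat 2 ∧
    triangleMat ![false, true, true] = joinedMat ∧ triangleMat ![true, false, true] = joinedMat ∧
    triangleMat ![true, true, false] = joinedMat ∧ triangleMat ![true, true, true] = joinedMat := by
  decide

theorem starMat_eval :
    starMat ![false, false, false] = separatedMat ∧ starMat ![true, false, false] = separatedMat ∧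
    starMat ![false, true, false] = separatedMat ∧ starMat ![false, false, true] = separatedMat ∧
    starMat ![false, true, true] = pairedMat 0 ∧ starMat ![true, false, true] = pairedMat 1 ∧
    starMat ![true, true, false] = pairedMat 2 ∧ starMat ![true, true, true] = joinedMat := by
  decide

theorem configWeight_vec (q0 q1 q2 : ℝ) (b0 b1 b2 : Bool) :
    configWeight ![q0, q1, q2] ![b0, b1, b2] =
      (if b0 then q0 else 1 - q0) * (if b1 then q1 else 1 - q1) * (if b2 then q2 else 1 - q2) := by
  rw [configWeight, Fin.prod_univ_three]
  rfl

theorem sum_triangleMat_eq_sum_starMat {p0 p1 p2 : ℝ} (hκ : kappaT p0 p1 p2 = 0)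
    (f : (Fin 3 → Fin 3 → Bool) → ℝ) :
    ∑ ω, configWeight ![p0, p1, p2] ω * f (triangleMat ω) =
      ∑ ω, configWeight ![1 - p0, 1 - p1, 1 - p2] ω * f (starMat ω) := by
  simp only [sum_fin_succ_pi, sum_fin_zero_pi, Fintype.sum_bool, triangleMat_eval,
    starMat_eval, configWeight_vec, if_true, if_false, Bool.false_eq_true]
  unfold kappaT at hκ
  linear_combination (f joinedMat - f separatedMat) * hκ

open scoped Classical in
theorem star_triangle_same_law_general (p0 p1 p2 : ℝ) (hκ : kappaT p0 p1 p2 = 0) :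
    ∀ c : Fin 3 → Fin 3 → Bool,
      (∑ ω : Fin 3 → Bool,
          if (∀ x y : Fin 3, triangleConn ω x y ↔ c x y = true) then
            configWeight ![p0, p1, p2] ω else 0) =
      (∑ ω : Fin 3 → Bool,
          if (∀ x y : Fin 3, starConn ω (Fin.castSucc x) (Fin.castSucc y) ↔ c x y = true) then
            configWeight ![1 - p0, 1 - p1, 1 - p2] ω else 0) := by
  intro c
  simp only [triangleConn_iff, starConn_castSucc_iff, forall_iff_eq_true_iff_eq]
  simpa only [mul_boole] using sum_triangleMat_eq_sum_starMat hκ fun m => if m = c then 1 else 0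

open scoped Classical in
/-- **star–triangle transformation.** If `κ_△(p0,p1,p2) = 0` with
`p ∈ [0,1)³`, then the vector of connectivity indicators between `A`, `B`, `C` in the
triangle (edges open with probabilities `p0, p1, p2`) has the same law as the
corresponding vector for the star (spokes open with probabilities
`1-p0, 1-p1, 1-p2`). -/
theorem star_triangle_same_law (p0 p1 p2 : ℝ)
    (h0 : p0 ∈ Set.Ico (0 : ℝ) 1) (h1 : p1 ∈ Set.Ico (0 : ℝ) 1)
    (h2 : p2 ∈ Set.Ico (0 : ℝ) 1) (hκ : kappaT p0 p1 p2 = 0) :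
    ∀ c : Fin 3 → Fin 3 → Bool,
      (∑ ω : Fin 3 → Bool,
          if (∀ x y : Fin 3, triangleConn ω x y ↔ c x y = true) then
            configWeight ![p0, p1, p2] ω else 0) =
      (∑ ω : Fin 3 → Bool,
          if (∀ x y : Fin 3, starConn ω (Fin.castSucc x) (Fin.castSucc y) ↔ c x y = true) then
            configWeight ![1 - p0, 1 - p1, 1 - p2] ω else 0) :=
  star_triangle_same_law_general p0 p1 p2 hκ

end Perc
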